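/- Let μ be a Borel probability measure on ℝ with continuous cumulative distribution function F and finite second moment, with mean E_F and variance var_F. Let θ, δ₀ ∈ ℝ, δ₁ > 0, and let Y be a real-valued random variable with P(Y > y) = F(θ − δ₀ − δ₁·y) for all y ∈ ℝ. Then the error variable E = Y − E(Y) has law equal to the pushforward of μ under z ↦ (E_F − z)/δ₁; in particular, the law of E does not depend on θ or δ₀, E has expectation 0, and Var(E) = var_F/δ₁². This gives the classical-test-theory decomposition Y = E(Y) + E with error-score distribution determined only by F and δ₁. -/

import Mathlib

/-!
Since `F` is the continuous cdf of `μ`, `μ` has no atoms, so the thresholds hypothesis says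
`P(Y > y) = μ(Iio (θ - δ₀ - δ₁ y)) = μ{z | y < (θ - δ₀ - z) / δ₁}`: `Y` has the law of the
decreasing affine image `(θ - δ₀ - Z) / δ₁` of `Z ~ μ`. Centering that image removes `θ - δ₀`,
which leaves `(E_F - Z) / δ₁`, and a variance scales by `δ₁⁻²` under it.
-/

open MeasureTheory ProbabilityTheory Set

lemma nullSingletonClass_of_continuous_cdf {μ : Measure ℝ} [IsProbabilityMeasure μ]
    (h : Continuous (cdf μ)) : NullSingletonClass μ where
  measure_singleton x := by
    rw [← measure_cdf μ, StieltjesFunction.measure_singleton,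
      h.continuousWithinAt.leftLim_eq, sub_self, ENNReal.ofReal_zero]

theorem MeasureTheory.Measure.ext_of_Ioi {α : Type*} [TopologicalSpace α] {_ : MeasurableSpace α}
    [SecondCountableTopology α] [LinearOrder α] [OrderTopology α] [BorelSpace α]
    (μ ν : Measure α) [IsProbabilityMeasure μ] [IsProbabilityMeasure ν]
    (h : ∀ a, μ (Ioi a) = ν (Ioi a)) : μ = ν :=
  Measure.ext_of_Iic μ ν fun a => by
    rw [← compl_Ioi, prob_compl_eq_one_sub measurableSet_Ioi,
      prob_compl_eq_one_sub measurableSet_Ioi, h]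

lemma preimage_const_sub_div_Ioi {a b : ℝ} (hb : 0 < b) (y : ℝ) :
    (fun z : ℝ => (a - z) / b) ⁻¹' Ioi y = Iio (a - b * y) := by
  ext z
  simp only [mem_preimage, mem_Ioi, mem_Iio, lt_div_iff₀ hb]
  constructor <;> intro h <;> linarith

lemma integral_const_sub_div {μ : Measure ℝ} [IsProbabilityMeasure μ]
    (hμ : Integrable (fun z => z) μ) (a b : ℝ) :
    ∫ z, (a - z) / b ∂μ = (a - ∫ z, z ∂μ) / b := by
  rw [integral_div, integral_sub (integrable_const a) hμ, integral_const, probReal_univ, one_smul]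

section

variable {Ω : Type*} [MeasurableSpace Ω]

theorem map_eq_map_const_sub_div_of_measure_lt {P : Measure Ω} [IsProbabilityMeasure P]
    {μ : Measure ℝ} [IsProbabilityMeasure μ] [NullSingletonClass μ] {a b : ℝ} (hb : 0 < b)
    {Y : Ω → ℝ} (hY : Measurable Y) (hYμ : ∀ y, P {ω | y < Y ω} = μ (Iic (a - b * y))) :
    P.map Y = μ.map (fun z => (a - z) / b) := by
  have : IsProbabilityMeasure (P.map Y) := Measure.isProbabilityMeasure_map hY.aemeasurable
  have : IsProbabilityMeasure (μ.map fun z => (a - z) / b) :=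
    Measure.isProbabilityMeasure_map (by fun_prop)
  refine Measure.ext_of_Ioi _ _ fun y => ?_
  rw [Measure.map_apply hY measurableSet_Ioi, Measure.map_apply (by fun_prop) measurableSet_Ioi,
    preimage_const_sub_div_Ioi hb, measure_congr Iio_ae_eq_Iic]
  exact hYμ y

/-- This holds also when `Y` is not integrable, since then `∫ Y = 0` by convention. -/
lemma integral_sub_integral_eq_zero {P : Measure Ω} [IsProbabilityMeasure P] (Y : Ω → ℝ) :
    ∫ ω, (Y ω - ∫ ω', Y ω' ∂P) ∂P = 0 := by
  by_cases hY : Integrable Y P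
  · rw [integral_sub hY (integrable_const _), integral_const, probReal_univ, one_smul, sub_self]
  · simp only [integral_undef hY, sub_zero]

theorem map_sub_integral_eq_of_map_eq {P : Measure Ω} {α : Type*} [MeasurableSpace α]
    {μ : Measure α} {Y : Ω → ℝ} {g : α → ℝ} (hY : Measurable Y) (hg : Measurable g)
    (h : P.map Y = μ.map g) :
    P.map (fun ω => Y ω - ∫ ω', Y ω' ∂P) = μ.map (fun z => g z - ∫ z', g z' ∂μ) := by
  have hmean : ∫ ω, Y ω ∂P = ∫ z, g z ∂μ := calc
    ∫ ω, Y ω ∂P = ∫ x, x ∂(P.map Y) := (integral_map hY.aemeasurable aestronglyMeasurable_id).symm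
    _ = ∫ x, x ∂(μ.map g) := by rw [h]
    _ = ∫ z, g z ∂μ := integral_map hg.aemeasurable aestronglyMeasurable_id
  set c := ∫ z, g z ∂μ
  calc P.map (fun ω => Y ω - ∫ ω', Y ω' ∂P) = (P.map Y).map (· - c) := by
        rw [hmean]; exact (Measure.map_map (measurable_sub_const c) hY).symm
    _ = (μ.map g).map (· - c) := by rw [h]
    _ = μ.map (fun z => g z - c) := Measure.map_map (measurable_sub_const c) hg

lemma variance_const_sub_div {μ : Measure Ω} [IsProbabilityMeasure μ] {X : Ω → ℝ}
    (hX : AEStronglyMeasurable X μ) (a b : ℝ) :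
    Var[fun ω => (a - X ω) / b; μ] = Var[X; μ] / b ^ 2 := by
  simp_rw [div_eq_inv_mul]
  rw [variance_const_mul, variance_const_sub hX, inv_pow]

end

/-- In the linear thresholds model with continuous response function `F`
(the CDF of a probability measure `μ` with finite second moment, mean `E_F` and variance
`var_F`), the error variable `E = Y - E(Y)` has law equal to the pushforward of `μ` under
`z ↦ (E_F - z)/δ₁` (hence independent of `θ` and `δ₀`), expectation `0`, and variance
`var_F / δ₁²`: the classical-test-theory decomposition `Y = E(Y) + E`. -/
theorem thresholds_linear_error_decomposition
    {Ω : Type*} [MeasurableSpace Ω] (P : Measure Ω) [IsProbabilityMeasure P]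
    (μ : Measure ℝ) [IsProbabilityMeasure μ]
    (F : ℝ → ℝ) (hF : ∀ t : ℝ, F t = (μ (Iic t)).toReal) (hFcont : Continuous F)
    (hμ2 : Integrable (fun z : ℝ => z ^ 2) μ)
    (θ δ₀ δ₁ : ℝ) (hδ₁ : 0 < δ₁)
    (Y : Ω → ℝ) (hYm : Measurable Y)
    (hY : ∀ y : ℝ, (P {ω | y < Y ω}).toReal = F (θ - δ₀ - δ₁ * y))
    (E : Ω → ℝ) (hE : ∀ ω, E ω = Y ω - ∫ ω', Y ω' ∂P) :
    Measure.map E P = Measure.map (fun z : ℝ => ((∫ w, w ∂μ) - z) / δ₁) μ ∧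
      ∫ ω, E ω ∂P = 0 ∧
      variance E P = (∫ z, (z - ∫ w, w ∂μ) ^ 2 ∂μ) / δ₁ ^ 2 := by
  have hF_eq_cdf : F = cdf μ := funext fun t => by rw [hF, cdf_eq_real, measureReal_def]
  have := nullSingletonClass_of_continuous_cdf (hF_eq_cdf ▸ hFcont)
  have hlawY : P.map Y = μ.map (fun z => (θ - δ₀ - z) / δ₁) :=
    map_eq_map_const_sub_div_of_measure_lt hδ₁ hYm fun y => by
      rw [← ENNReal.toReal_eq_toReal_iff' (measure_ne_top _ _) (measure_ne_top _ _), hY, hF]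
  have hμ1 : Integrable (fun z : ℝ => z) μ :=
    ((memLp_two_iff_integrable_sq aestronglyMeasurable_id).mpr hμ2).integrable one_le_two
  have hE' : E = fun ω => Y ω - ∫ ω', Y ω' ∂P := funext hE
  have hlawE : P.map E = μ.map (fun z => ((∫ w, w ∂μ) - z) / δ₁) := by
    rw [hE', map_sub_integral_eq_of_map_eq hYm (by fun_prop) hlawY, integral_const_sub_div hμ1]
    congr with z
    ring
  refine ⟨hlawE, hE' ▸ integral_sub_integral_eq_zero Y, ?_⟩
  rw [← variance_id_map (hE' ▸ hYm.sub_const _).aemeasurable, hlawE,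
    variance_id_map (by fun_prop), variance_const_sub_div (X := fun z => z) aestronglyMeasurable_id,
    variance_eq_integral (X := fun z => z) aemeasurable_id]
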